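/- arXiv:0901.3117 — 2 statements merged into one kernel-verified Lean document; each statement's English description precedes it below -/
import Mathlib

section
/- Let F be a nonempty compact convex subset of ℝⁿ with support function σ_F(c) = sup_{x∈F} ⟨c, x⟩. Let c̄ ∈ ℝⁿ, let x̄ ∈ F satisfy σ_F(c̄) = ⟨c̄, x̄⟩, and suppose there exist ε > 0 and ρ > 0 with diam(F) < ρ ε such that σ_F(c) ≤ σ_F(c̄) + ⟨x̄, c − c̄⟩ + (ρ/2)‖c − c̄‖² for all c in the closed ball B(c̄, ε). Then ⟨c̄, x̄⟩ ≥ ⟨c̄, x⟩ + (1/(2ρ))‖x − x̄‖² for all x ∈ F; that is, x̄ is a strong maximizer of ⟨c̄,·⟩ over F with modulus 1/(2ρ). -/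
/-!
Tilt the objective towards a given `x ∈ F`: put `c = c̄ + ρ⁻¹ (x - x̄)`. Since
`‖c - c̄‖ ≤ diam F / ρ < ε`, the quadratic upper estimate applies at `c`, and comparing it with
`⟪c, x⟫ ≤ σ_F(c)` leaves `⟪c̄, x⟫ + ρ⁻¹‖x - x̄‖² ≤ ⟪c̄, x̄⟫ + (2ρ)⁻¹‖x - x̄‖²`.
-/

open Bornology
open scoped RealInnerProductSpace

section SupportFunction

variable {E : Type*} [NormedAddCommGroup E] [InnerProductSpace ℝ E]

/-- The support function `σ_F(c) = sup_{x ∈ F} ⟪c, x⟫`; as an `sSup` in `ℝ` it is junk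
(`0`) unless `F` is nonempty and bounded. -/
noncomputable def supportFunction (F : Set E) (c : E) : ℝ :=
  sSup ((fun x => ⟪c, x⟫) '' F)

theorem inner_le_supportFunction {F : Set E} (hF : IsBounded F) (c : E) {x : E} (hx : x ∈ F) :
    ⟪c, x⟫ ≤ supportFunction F c := by
  refine le_csSup ?_ ⟨x, hx, rfl⟩
  obtain ⟨R, hR⟩ := hF.subset_closedBall 0
  refine ⟨‖c‖ * R, ?_⟩
  rintro _ ⟨y, hy, rfl⟩
  have hyR : ‖y‖ ≤ R := by simpa using hR hy
  calc ⟪c, y⟫ ≤ ‖c‖ * ‖y‖ := real_inner_le_norm c y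
    _ ≤ ‖c‖ * R := by gcongr

theorem norm_inv_smul_sub_le_of_diam_lt {F : Set E} (hF : IsBounded F) {x y : E}
    (hx : x ∈ F) (hy : y ∈ F) {ε ρ : ℝ} (hρ : 0 < ρ) (hdiam : Metric.diam F < ρ * ε) :
    ‖ρ⁻¹ • (x - y)‖ ≤ ε := by
  have hxy : ‖x - y‖ ≤ ρ * ε := by
    rw [← dist_eq_norm]
    exact (Metric.dist_le_diam_of_mem hF hx hy).trans hdiam.le
  rw [norm_smul, Real.norm_of_nonneg (inv_nonneg.2 hρ.le), inv_mul_le_iff₀ hρ]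
  exact hxy

/-- The step `ρ⁻¹` maximizes `t ↦ t - ρ t² / 2`, which is what produces the modulus `1/(2ρ)`. -/
theorem inner_tilt_sub_quadratic_eq (cbar xbar x : E) (ρ : ℝ) (hρ : ρ ≠ 0) :
    ⟪cbar + ρ⁻¹ • (x - xbar), x⟫ - ⟪xbar, ρ⁻¹ • (x - xbar)⟫
        - ρ / 2 * ‖ρ⁻¹ • (x - xbar)‖ ^ 2 =
      ⟪cbar, x⟫ + 1 / (2 * ρ) * ‖x - xbar‖ ^ 2 := by
  have hsq : ⟪x - xbar, x⟫ - ⟪xbar, x - xbar⟫ = ‖x - xbar‖ ^ 2 := by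
    rw [real_inner_comm (x - xbar) xbar, ← inner_sub_right, real_inner_self_eq_norm_sq]
  rw [inner_add_left, real_inner_smul_left, real_inner_smul_right, norm_smul, mul_pow,
    Real.norm_eq_abs, sq_abs]
  linear_combination ρ⁻¹ * hsq + (by field_simp; ring : ρ⁻¹ - ρ / 2 * ρ⁻¹ ^ 2 = 1 / (2 * ρ)) *
    ‖x - xbar‖ ^ 2

end SupportFunction

theorem strong_maximizer_of_quadratic_expansion_general (n : ℕ)
    (F : Set (EuclideanSpace ℝ (Fin n)))
    (hcomp : IsCompact F)
    (cbar xbar : EuclideanSpace ℝ (Fin n)) (hxbar : xbar ∈ F)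
    (ε ρ : ℝ) (hρ : 0 < ρ)
    (hdiam : Metric.diam F < ρ * ε)
    (hmax : sSup ((fun x => (inner ℝ cbar x : ℝ)) '' F) = (inner ℝ cbar xbar : ℝ))
    (hquad : ∀ c ∈ Metric.closedBall cbar ε,
      sSup ((fun x => (inner ℝ c x : ℝ)) '' F) ≤
        sSup ((fun x => (inner ℝ cbar x : ℝ)) '' F) +
          (inner ℝ xbar (c - cbar) : ℝ) + ρ / 2 * ‖c - cbar‖ ^ 2) :
    ∀ x ∈ F, (inner ℝ cbar x : ℝ) + 1 / (2 * ρ) * ‖x - xbar‖ ^ 2 ≤ inner ℝ cbar xbar := by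
  intro x hx
  set c := cbar + ρ⁻¹ • (x - xbar)
  have hshift : c - cbar = ρ⁻¹ • (x - xbar) := add_sub_cancel_left cbar _
  have hc : c ∈ Metric.closedBall cbar ε := by
    rw [mem_closedBall_iff_norm, hshift]
    exact norm_inv_smul_sub_le_of_diam_lt hcomp.isBounded hx hxbar hρ hdiam
  have hsupport : ⟪c, x⟫ ≤ ⟪cbar, xbar⟫ + ⟪xbar, c - cbar⟫ + ρ / 2 * ‖c - cbar‖ ^ 2 :=
    (inner_le_supportFunction hcomp.isBounded c hx).trans (hmax ▸ hquad c hc)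
  rw [hshift] at hsupport
  have := inner_tilt_sub_quadratic_eq cbar xbar x ρ hρ.ne'
  linarith

/-- If the support function `σ_F` of a nonempty compact convex set `F` admits the upper
quadratic estimate `σ_F(c) ≤ σ_F(c̄) + ⟪x̄, c − c̄⟫ + (ρ/2)‖c − c̄‖²` on the ball
`B(c̄, ε)`, where `σ_F(c̄) = ⟪c̄, x̄⟫`, `x̄ ∈ F` and `diam F < ρ ε`, then `x̄` is a strong
maximizer of `⟪c̄,·⟫` over `F` with modulus `1/(2ρ)`. -/
theorem strong_maximizer_of_quadratic_expansion (n : ℕ)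
    (F : Set (EuclideanSpace ℝ (Fin n)))
    (hne : F.Nonempty) (hcomp : IsCompact F) (hconv : Convex ℝ F)
    (cbar xbar : EuclideanSpace ℝ (Fin n)) (hxbar : xbar ∈ F)
    (ε ρ : ℝ) (hε : 0 < ε) (hρ : 0 < ρ)
    (hdiam : Metric.diam F < ρ * ε)
    (hmax : sSup ((fun x => (inner ℝ cbar x : ℝ)) '' F) = (inner ℝ cbar xbar : ℝ))
    (hquad : ∀ c ∈ Metric.closedBall cbar ε,
      sSup ((fun x => (inner ℝ c x : ℝ)) '' F) ≤
        sSup ((fun x => (inner ℝ cbar x : ℝ)) '' F) +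
          (inner ℝ xbar (c - cbar) : ℝ) + ρ / 2 * ‖c - cbar‖ ^ 2) :
    ∀ x ∈ F, (inner ℝ cbar x : ℝ) + 1 / (2 * ρ) * ‖x - xbar‖ ^ 2 ≤ inner ℝ cbar xbar :=
  strong_maximizer_of_quadratic_expansion_general n F hcomp cbar xbar hxbar ε ρ hρ hdiam hmax hquad
end

section
/- Let F = {(u,v,w) ∈ ℝ³ : w ≥ u² + |v|}. Then the set of differences of normals at the origin spans the plane orthogonal to the first coordinate axis: {y − z : y, z ∈ N_F(0,0,0)} = {(a,b,c) ∈ ℝ³ : a = 0} = {0} × ℝ × ℝ. -/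
/-!
Testing a normal `c` at the origin against the parabola `t ↦ (t, 0, t²) ⊆ F` gives
`c₀ t + c₂ t² ≤ 0` for all `t`, which forces `c₀ = 0`. Conversely every `c` with `c₀ = 0` and
`|c₁| ≤ -c₂` is normal, since `F` lies in the cone `|v| ≤ w`; any `d` with `d₀ = 0` is the
difference of two such vectors.
-/

open RealInnerProductSpace

section NormalCone

variable {E : Type*} [NormedAddCommGroup E] [InnerProductSpace ℝ E]

def normalCone (F : Set E) (x : E) : Set E :=
  {c | ∀ x' ∈ F, ⟪c, x' - x⟫ ≤ 0}

lemma eq_zero_of_forall_mul_add_mul_sq_nonpos {a b : ℝ} (h : ∀ t : ℝ, a * t + b * t ^ 2 ≤ 0) :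
    a = 0 := by
  -- at `t = a / (|b| + 1)` the quadratic term is dominated by the linear one
  have hpos : 0 < |b| + 1 := by positivity
  have key := h (a / (|b| + 1))
  have hscaled : a ^ 2 * (|b| + 1 + b) ≤ 0 := by
    field_simp at key
    nlinarith [key]
  have hsq : a ^ 2 ≤ 0 := by nlinarith [neg_abs_le b, sq_nonneg a]
  exact pow_eq_zero_iff two_ne_zero |>.mp (le_antisymm hsq (sq_nonneg a))

lemma inner_eq_zero_of_mem_normalCone_zero {F : Set E} {u v c : E}
    (hF : ∀ t : ℝ, t • u + t ^ 2 • v ∈ F) (hc : c ∈ normalCone F 0) : ⟪c, u⟫ = 0 :=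
  eq_zero_of_forall_mul_add_mul_sq_nonpos fun t => by
    simpa [inner_add_right, inner_smul_right, mul_comm] using hc _ (hF t)

end NormalCone

def ridge : Set (EuclideanSpace ℝ (Fin 3)) := {p | p 0 ^ 2 + |p 1| ≤ p 2}

lemma smul_add_sq_smul_mem_ridge (t : ℝ) :
    t • !₂[(1 : ℝ), 0, 0] + t ^ 2 • !₂[0, 0, 1] ∈ ridge := by
  simp [ridge]

lemma mem_normalCone_ridge_zero {c : EuclideanSpace ℝ (Fin 3)} (h0 : c 0 = 0)
    (h12 : |c 1| ≤ -c 2) : c ∈ normalCone ridge 0 := by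
  intro q (hq : q 0 ^ 2 + |q 1| ≤ q 2)
  have hq1 : |q 1| ≤ q 2 := by nlinarith [sq_nonneg (q 0)]
  simp only [sub_zero, PiLp.inner_apply, RCLike.inner_apply, conj_trivial, Fin.sum_univ_three, h0]
  calc q 0 * 0 + q 1 * c 1 + q 2 * c 2 ≤ |q 1| * |c 1| + q 2 * c 2 := by
        nlinarith [le_abs_self (q 1 * c 1), abs_mul (q 1) (c 1)]
    _ ≤ q 2 * (-c 2) + q 2 * c 2 := by gcongr; exact (abs_nonneg _).trans hq1
    _ = 0 := by ring

lemma apply_zero_eq_zero_of_mem_normalCone_ridge {c : EuclideanSpace ℝ (Fin 3)}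
    (hc : c ∈ normalCone ridge 0) : c 0 = 0 := by
  simpa [PiLp.inner_apply, Fin.sum_univ_three] using
    inner_eq_zero_of_mem_normalCone_zero smul_add_sq_smul_mem_ridge hc

/-- For `F = {(u,v,w) : w ≥ u² + |v|} ⊆ ℝ³`, the differences of normals at the origin
span the plane orthogonal to the first coordinate axis:
`N_F(0) − N_F(0) = {(a,b,c) : a = 0}`. -/
theorem normal_cone_differences_ridge :
    {d : EuclideanSpace ℝ (Fin 3) |
        ∃ y ∈ {y : EuclideanSpace ℝ (Fin 3) |
            ∀ q ∈ {p : EuclideanSpace ℝ (Fin 3) | p 0 ^ 2 + |p 1| ≤ p 2},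
              (inner ℝ y (q - (0 : EuclideanSpace ℝ (Fin 3))) : ℝ) ≤ 0},
          ∃ z ∈ {y : EuclideanSpace ℝ (Fin 3) |
            ∀ q ∈ {p : EuclideanSpace ℝ (Fin 3) | p 0 ^ 2 + |p 1| ≤ p 2},
              (inner ℝ y (q - (0 : EuclideanSpace ℝ (Fin 3))) : ℝ) ≤ 0},
            d = y - z} =
      {d : EuclideanSpace ℝ (Fin 3) | d 0 = 0} := by
  change {d | ∃ y ∈ normalCone ridge 0, ∃ z ∈ normalCone ridge 0, d = y - z} = _
  ext d
  constructor
  · rintro ⟨y, hy, z, hz, rfl⟩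
    simp [apply_zero_eq_zero_of_mem_normalCone_ridge hy,
      apply_zero_eq_zero_of_mem_normalCone_ridge hz]
  · intro (hd : d 0 = 0)
    set M := |d 1| + |d 2|
    refine ⟨!₂[0, d 1, d 2 - M], mem_normalCone_ridge_zero rfl ?_,
      !₂[0, 0, -M], mem_normalCone_ridge_zero rfl ?_, ?_⟩
    · change |d 1| ≤ -(d 2 - M)
      linarith [le_abs_self (d 2)]
    · change |(0 : ℝ)| ≤ -(-M)
      simp only [abs_zero, neg_neg, M]
      positivity
    · ext i
      fin_cases i <;> simp [hd]
end
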